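/- arXiv:1801.00394 — 3 statements merged into one kernel-verified Lean document; each statement's English description precedes it below -/
import Mathlib

section
/- For jointly distributed random variables where U_k → X(L) → Y_k forms a Markov chain for each k in D^c, the inequality T(U(K),X(L)) - T(U(D),X(L)) - Σ_{k∈D^c} I(U_k;Y_k) ≥ 0 holds, where T denotes total correlation T(X(S)) = Σ_{l∈S} H(X_l) - H(X(S)). -/
open Finset

/-!
Entropic formalization: random variables are indexed by `Idx K L`
(`u k` = user auxiliary `U_k`, `x l` = BS signal `X_l`, `y k` = channel output `Y_k`).
`H` is the joint (Shannon) entropy function on finite sets of variables; it satisfies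
the standard entropy axioms (normalized, monotone, submodular).  The Markov chain
`U_k → X(𝓛) → Y_k` is expressed as vanishing conditional mutual information.
-/

abbrev Idx (K L : ℕ) := Fin K ⊕ (Fin L ⊕ Fin K)

def u {K L : ℕ} (k : Fin K) : Idx K L := Sum.inl k
def x {K L : ℕ} (l : Fin L) : Idx K L := Sum.inr (Sum.inl l)
def y {K L : ℕ} (k : Fin K) : Idx K L := Sum.inr (Sum.inr k)

/-- Conditional mutual information `I(A;B|C)` computed from joint entropy `H`. -/
def CMI {K L : ℕ} (H : Finset (Idx K L) → ℝ) (A B C : Finset (Idx K L)) : ℝ :=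
  H (A ∪ C) + H (B ∪ C) - H (A ∪ B ∪ C) - H C

/-- The set of variables `U(D)`. -/
def Uset {K L : ℕ} (D : Finset (Fin K)) : Finset (Idx K L) := D.image u

/-- The set of all BS variables `X(𝓛)`. -/
def Xall (K L : ℕ) : Finset (Idx K L) := Finset.univ.image x

/-- Total correlation `T(U(D), X(𝓛)) = ∑_{k∈D} H(U_k) + ∑_l H(X_l) - H(U(D),X(𝓛))`. -/
def Tcor {K L : ℕ} (H : Finset (Idx K L) → ℝ) (D : Finset (Fin K)) : ℝ :=
  (∑ k ∈ D, H {u k}) + (∑ l : Fin L, H {x l}) - H (Uset D ∪ Xall K L)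

/-!
Writing `X = X(𝓛)` and `D^c = 𝓚 \ D`, the difference of total correlations is
`∑_{k ∈ D^c} H(U_k) - (H(U(𝓚), X) - H(U(D), X))`. By submodularity the joint entropy
gains at most `H(U_k, X) - H(X)` when `U_k` is added to a set already containing `X`,
so this difference is at least `∑_{k ∈ D^c} I(U_k; X)`. The Markov chain `U_k → X → Y_k`
gives the data processing inequality `I(U_k; Y_k) ≤ I(U_k; X)`, which finishes the proof.
-/

section Submodular

variable {α : Type*} [DecidableEq α] {H : Finset α → ℝ}

theorem submodular_union_add_le
    (hsub : ∀ A B : Finset α, H (A ∪ B) + H (A ∩ B) ≤ H A + H B)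
    {A B C : Finset α} (hBA : B ⊆ A) (hAC : Disjoint A C) :
    H (A ∪ C) + H B ≤ H A + H (B ∪ C) := by
  have hunion : A ∪ (B ∪ C) = A ∪ C := by
    rw [← union_assoc, union_eq_left.mpr hBA]
  have hinter : A ∩ (B ∪ C) = B := by
    rw [inter_union_distrib_left, inter_eq_right.mpr hBA, disjoint_iff_inter_eq_empty.mp hAC,
      union_empty]
  simpa [hunion, hinter] using hsub A (B ∪ C)

theorem submodular_union_sub_le_sum
    (hsub : ∀ A B : Finset α, H (A ∪ B) + H (A ∩ B) ≤ H A + H B)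
    {A B : Finset α} (hBA : B ⊆ A) (T : Finset α) (hAT : Disjoint A T) :
    H (A ∪ T) - H A ≤ ∑ t ∈ T, (H (insert t B) - H B) := by
  induction T using Finset.induction_on with
  | empty => simp
  | @insert a T haT ih =>
    obtain ⟨haA, hAT'⟩ := disjoint_insert_right.mp hAT
    have hgain := submodular_union_add_le hsub (hBA.trans subset_union_left)
      (disjoint_singleton_right.mpr (by simp [haA, haT]) : Disjoint (A ∪ T) {a})
    rw [union_insert, sum_insert haT, insert_eq a B, union_comm {a} B]
    rw [union_comm, ← insert_eq] at hgain
    linarith [ih hAT']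

end Submodular

theorem CMI_empty_le_of_markov {K L : ℕ} {H : Finset (Idx K L) → ℝ}
    (hsub : ∀ A B : Finset (Idx K L), H (A ∪ B) + H (A ∩ B) ≤ H A + H B)
    {A B C : Finset (Idx K L)} (hdisj : Disjoint (B ∪ C) A) (hmarkov : CMI H A B C = 0) :
    CMI H A B ∅ ≤ CMI H A C ∅ := by
  have key : H (A ∪ B ∪ C) + H B ≤ H (B ∪ C) + H (A ∪ B) := by
    have := submodular_union_add_le hsub (subset_union_left : B ⊆ B ∪ C) hdisj
    rwa [union_comm, ← union_assoc, union_comm B A] at this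
  simp only [CMI, union_empty] at hmarkov ⊢
  linarith

theorem u_injective {K L : ℕ} : Function.Injective (u : Fin K → Idx K L) :=
  fun _ _ h => Sum.inl_injective h

theorem disjoint_Uset_Xall {K L : ℕ} (D : Finset (Fin K)) : Disjoint (Uset D) (Xall K L) := by
  simp [Uset, Xall, u, x, disjoint_left]

theorem Uset_union {K L : ℕ} (D E : Finset (Fin K)) :
    (Uset (D ∪ E) : Finset (Idx K L)) = Uset D ∪ Uset E :=
  image_union _ _

theorem stmt0_general {K L : ℕ} (H : Finset (Idx K L) → ℝ)
    (hzero : H ∅ = 0)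
    (hsub : ∀ A B : Finset (Idx K L), H (A ∪ B) + H (A ∩ B) ≤ H A + H B)
    (hmarkov : ∀ k : Fin K, CMI H {u k} {y k} (Xall K L) = 0)
    (D : Finset (Fin K)) :
    Tcor H Finset.univ - Tcor H D -
      ∑ k ∈ Finset.univ \ D, CMI H {u k} {y k} ∅ ≥ 0 := by
  let gain (k : Fin K) : ℝ := H (insert (u k) (Xall K L)) - H (Xall K L)
  have hdata (k : Fin K) : CMI H {u k} {y k} ∅ ≤ H {u k} - gain k := by
    have hdisj : Disjoint ({y k} ∪ Xall K L) {u k} :=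
      disjoint_singleton_right.mpr (by simp [Xall, u, x, y])
    have := CMI_empty_le_of_markov hsub hdisj (hmarkov k)
    simp only [CMI, union_empty, hzero, ← insert_eq] at this ⊢
    linarith
  have hgain :
      H (Uset univ ∪ Xall K L) - H (Uset D ∪ Xall K L) ≤ ∑ k ∈ univ \ D, gain k := by
    have hdisj : Disjoint (Uset D ∪ Xall K L) (Uset (univ \ D)) :=
      disjoint_union_left.mpr ⟨disjoint_image u_injective |>.mpr sdiff_disjoint.symm,
        (disjoint_Uset_Xall _).symm⟩
    have hsplit : (Uset univ ∪ Xall K L : Finset (Idx K L)) =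
        Uset D ∪ Xall K L ∪ Uset (univ \ D) := by
      rw [union_right_comm, ← Uset_union, union_sdiff_of_subset (subset_univ D)]
    rw [hsplit]
    exact (submodular_union_sub_le_sum hsub subset_union_right _ hdisj).trans_eq
      (sum_image u_injective.injOn)
  have hsum := sum_le_sum fun k (_ : k ∈ univ \ D) => hdata k
  rw [sum_sub_distrib] at hsum
  have hsplit := sum_sdiff (f := fun k => H ({u k} : Finset (Idx K L))) (subset_univ D)
  simp only [Tcor]
  linarith

theorem stmt0 {K L : ℕ} (H : Finset (Idx K L) → ℝ)
    (hzero : H ∅ = 0)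
    (hmono : ∀ A B : Finset (Idx K L), A ⊆ B → H A ≤ H B)
    (hsub : ∀ A B : Finset (Idx K L), H (A ∪ B) + H (A ∩ B) ≤ H A + H B)
    (hmarkov : ∀ k : Fin K, CMI H {u k} {y k} (Xall K L) = 0)
    (D : Finset (Fin K)) :
    Tcor H Finset.univ - Tcor H D -
      ∑ k ∈ Finset.univ \ D, CMI H {u k} {y k} ∅ ≥ 0 :=
  stmt0_general H hzero hsub hmarkov D
end

section
/- Suppose X_1,...,X_L are mutually independent random vectors, Y = H X + Z and U = H X + Z̃, where Z and Z̃ are mutually independent noise vectors independent of X, and the components of U=(U_1,...,U_K) are conditionally independent given X. Then Σ_{k=1}^K I(U_k;Y_k) - T(U_1,...,U_K) = I(U_1,...,U_K; X_1,...,X_L) - Σ_{k=1}^K I(U_k; X_1,...,X_L | Y_k), where T(U(K)) = Σ_k h(U_k) - h(U_1,...,U_K). -/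
open Finset

/-- The set of all `U` variables. -/
def Uall (K L : ℕ) : Finset (Idx K L) := Finset.univ.image u

/-- Total correlation `T(U(𝒦)) = ∑_k H(U_k) - H(U(𝒦))`. -/
def TcorU {K L : ℕ} (H : Finset (Idx K L) → ℝ) : ℝ :=
  (∑ k : Fin K, H {u k}) - H (Uall K L)

theorem stmt3 {K L : ℕ} (H : Finset (Idx K L) → ℝ)
    (hzero : H ∅ = 0)
    -- the components of `U` are conditionally independent given `X(𝓛)`:
    (hcondindep : H (Uall K L ∪ Xall K L) - H (Xall K L)
        = ∑ k : Fin K, (H ({u k} ∪ Xall K L) - H (Xall K L)))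
    -- Markov chains `U_k → X(𝓛) → Y_k`:
    (hmarkov : ∀ k : Fin K, CMI H {u k} {y k} (Xall K L) = 0) :
    (∑ k : Fin K, CMI H {u k} {y k} ∅) - TcorU H
      = CMI H (Uall K L) (Xall K L) ∅
        - ∑ k : Fin K, CMI H {u k} (Xall K L) {y k} := by
  have key : ∀ k : Fin K,
      CMI H {u k} (Xall K L) {y k}
        = H ({u k} ∪ {y k}) - H ({u k} ∪ Xall K L) + H (Xall K L) - H {y k} := by
    intro k
    have hm := hmarkov k
    simp only [CMI] at hm ⊢
    have e1 : ({u k} : Finset (Idx K L)) ∪ {y k} ∪ Xall K L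
        = {u k} ∪ Xall K L ∪ {y k} := by ac_rfl
    have e2 : Xall K L ∪ ({y k} : Finset (Idx K L)) = {y k} ∪ Xall K L := by
      exact Finset.union_comm _ _
    rw [e1] at hm
    rw [e2]
    linarith
  rw [Finset.sum_congr rfl (fun k _ => key k)]
  simp only [CMI, TcorU, Finset.union_empty, hzero, sub_zero]
  simp only [Finset.sum_sub_distrib, Finset.sum_add_distrib, Finset.sum_const,
    Finset.card_univ, Fintype.card_fin] at hcondindep ⊢
  linarith
end

section
/- Entropy-power-style bound used for fronthaul comparison: for discrete (or continuous, with finite entropies) random variables with the Markov chain U(D) → X(L) → Y_k for each k and conditional independence of the U's given X(L): Σ_{k∈K} I(U_k;Y_k) + C - T(U(K),X(L)) ≤ Σ_{k∈D} I(U_k;Y_k) + C - T(U(D),X(L)) for every D ⊆ K and every constant C. -/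
open Finset

lemma mem_Uset {K L : ℕ} (D : Finset (Fin K)) (i : Idx K L) :
    i ∈ Uset (L := L) D ↔ ∃ k ∈ D, u k = i := by
  simp [Uset]

/-- Per-user bound: `I(U_k;Y_k) ≤ H(U_k) - (H(U_k,X) - H(X))`, i.e. data processing. -/
lemma key_bound {K L : ℕ} (H : Finset (Idx K L) → ℝ)
    (hzero : H ∅ = 0)
    (hmono : ∀ A B : Finset (Idx K L), A ⊆ B → H A ≤ H B)
    (hsub : ∀ A B : Finset (Idx K L), H (A ∪ B) + H (A ∩ B) ≤ H A + H B)
    (hmarkov : ∀ k : Fin K, CMI H {u k} {y k} (Xall K L) = 0) (k : Fin K) :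
    CMI H {u k} {y k} ∅ ≤ H {u k} - (H ({u k} ∪ Xall K L) - H (Xall K L)) := by
  have hm := hmarkov k
  unfold CMI at hm ⊢
  set X := Xall K L
  have hsm := hsub ({u k} ∪ {y k}) ({y k} ∪ X)
  have hU : ({u k} ∪ {y k} : Finset (Idx K L)) ∪ ({y k} ∪ X) = {u k} ∪ {y k} ∪ X := by
    ext i; simp [or_comm, or_assoc, or_left_comm]
  have hI : H ({y k} : Finset (Idx K L)) ≤ H (({u k} ∪ {y k}) ∩ ({y k} ∪ X)) := by
    apply hmono
    intro i hi
    simp only [Finset.mem_inter, Finset.mem_union, Finset.mem_singleton]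
    simp only [Finset.mem_singleton] at hi
    tauto
  rw [hU] at hsm
  have e1 : ({u k} : Finset (Idx K L)) ∪ ∅ = {u k} := Finset.union_empty _
  have e2 : ({y k} : Finset (Idx K L)) ∪ ∅ = {y k} := Finset.union_empty _
  have e3 : ({u k} : Finset (Idx K L)) ∪ {y k} ∪ ∅ = {u k} ∪ {y k} := Finset.union_empty _
  rw [e1, e2, e3, hzero]
  linarith

/-- Subadditivity of conditional entropy given `X`. -/
lemma step2 {K L : ℕ} (H : Finset (Idx K L) → ℝ)
    (hsub : ∀ A B : Finset (Idx K L), H (A ∪ B) + H (A ∩ B) ≤ H A + H B)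
    (hmono : ∀ A B : Finset (Idx K L), A ⊆ B → H A ≤ H B)
    (D : Finset (Fin K)) (S : Finset (Fin K)) :
    H (Uset (D ∪ S) ∪ Xall K L) ≤
      H (Uset D ∪ Xall K L) + ∑ k ∈ S, (H ({u k} ∪ Xall K L) - H (Xall K L)) := by
  classical
  induction S using Finset.induction_on with
  | empty => simp
  | @insert a S ha ih =>
    have hsm := hsub (Uset (D ∪ S) ∪ Xall K L) ({u a} ∪ Xall K L)
    have hU : (Uset (D ∪ S) ∪ Xall K L) ∪ ({u a} ∪ Xall K L)
        = Uset (D ∪ insert a S) ∪ Xall K L := by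
      ext i
      simp only [Finset.mem_union, mem_Uset, Finset.mem_insert, Finset.mem_singleton]
      constructor
      · rintro ((⟨j, hj, rfl⟩ | h) | (rfl | h))
        · exact Or.inl ⟨j, by tauto, rfl⟩
        · exact Or.inr h
        · exact Or.inl ⟨a, by tauto, rfl⟩
        · exact Or.inr h
      · rintro (⟨j, hj, rfl⟩ | h)
        · rcases hj with hj | (rfl | hj)
          · exact Or.inl (Or.inl ⟨j, by tauto, rfl⟩)
          · exact Or.inr (Or.inl rfl)
          · exact Or.inl (Or.inl ⟨j, by tauto, rfl⟩)
        · exact Or.inl (Or.inr h)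
    have hI : H (Xall K L) ≤ H ((Uset (D ∪ S) ∪ Xall K L) ∩ ({u a} ∪ Xall K L)) := by
      apply hmono
      intro i hi
      simp only [Finset.mem_inter, Finset.mem_union]
      tauto
    rw [hU] at hsm
    rw [Finset.sum_insert ha]
    linarith

theorem stmt19 {K L : ℕ} (H : Finset (Idx K L) → ℝ)
    (hzero : H ∅ = 0)
    (hmono : ∀ A B : Finset (Idx K L), A ⊆ B → H A ≤ H B)
    (hsub : ∀ A B : Finset (Idx K L), H (A ∪ B) + H (A ∩ B) ≤ H A + H B)
    (hmarkov : ∀ k : Fin K, CMI H {u k} {y k} (Xall K L) = 0)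
    (D : Finset (Fin K)) (C : ℝ) :
    (∑ k : Fin K, CMI H {u k} {y k} ∅) + C - Tcor H Finset.univ ≤
      (∑ k ∈ D, CMI H {u k} {y k} ∅) + C - Tcor H D := by
  classical
  have hsplit1 : ∑ k ∈ Finset.univ \ D, CMI H {u k} {y k} ∅
      + ∑ k ∈ D, CMI H {u k} {y k} ∅ = ∑ k : Fin K, CMI H {u k} {y k} ∅ :=
    Finset.sum_sdiff (Finset.subset_univ D)
  have hsplit2 : ∑ k ∈ Finset.univ \ D, H ({u k} : Finset (Idx K L))
      + ∑ k ∈ D, H ({u k} : Finset (Idx K L)) = ∑ k : Fin K, H ({u k} : Finset (Idx K L)) :=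
    Finset.sum_sdiff (Finset.subset_univ D)
  have hCMI : ∑ k ∈ Finset.univ \ D, CMI H {u k} {y k} ∅ ≤
      ∑ k ∈ Finset.univ \ D, (H {u k} - (H ({u k} ∪ Xall K L) - H (Xall K L))) :=
    Finset.sum_le_sum fun k _ => key_bound H hzero hmono hsub hmarkov k
  rw [Finset.sum_sub_distrib] at hCMI
  have h2 := step2 H hsub hmono D (Finset.univ \ D)
  rw [Finset.union_sdiff_of_subset (Finset.subset_univ D)] at h2
  simp only [Tcor]
  linarith
end
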